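/- arXiv:2112.14557 — 3 statements merged into one kernel-verified Lean document; each statement's English description precedes it below -/
import Mathlib

section
/- The map Y_r is injective on the closed half-plane {w ∈ ℂ : Im w ≥ −1}, for every r ∈ (0, 1/2]. -/
noncomputable def Yr (r : ℝ) (w : ℂ) : ℂ :=
  ((r * w.re : ℝ) : ℂ) +
    Complex.I / (2 * (Real.pi : ℂ)) *
      ((Real.log (norm
        ((((Real.exp (-3 * Real.pi * r) : ℝ) : ℂ) -
            Complex.exp (-(Real.pi * r : ℂ) * Complex.I) *
              Complex.exp (-(2 * Real.pi * r : ℂ) * Complex.I * w)) /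
          (((Real.exp (-3 * Real.pi * r) : ℝ) : ℂ) -
            Complex.exp ((Real.pi * r : ℂ) * Complex.I)))) : ℝ) : ℂ)

lemma aux_re (a L : ℝ) : ((a:ℂ) + Complex.I / (2*(Real.pi:ℂ)) * (L:ℂ)).re = a := by
  simp [Complex.div_re, Complex.mul_re]

lemma aux_im (a L : ℝ) : ((a:ℂ) + Complex.I / (2*(Real.pi:ℂ)) * (L:ℂ)).im = L / (2*Real.pi) := by
  have h : Complex.I / (2*(Real.pi:ℂ)) * (L:ℂ) = ((L / (2*Real.pi) : ℝ):ℂ) * Complex.I := by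
    push_cast; field_simp
  rw [h, Complex.add_im, Complex.mul_I_im, Complex.ofReal_im, Complex.ofReal_re, zero_add]

lemma aux_key (E t1 t2 : ℝ) (c : ℂ) (hc : norm c = 1)
    (hE : 0 < E) (ht1 : E < t1) (ht2 : E < t2)
    (h : norm ((E:ℂ) - c * t1) = norm ((E:ℂ) - c * t2)) : t1 = t2 := by
  have hre : |c.re| ≤ 1 := by
    have := Complex.abs_re_le_norm c; rwa [hc] at this
  have hre1 : c.re ≤ 1 := (abs_le.mp hre).2
  have hsq : Complex.normSq ((E:ℂ) - c * t1) = Complex.normSq ((E:ℂ) - c * t2) := by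
    rw [← Complex.sq_norm, ← Complex.sq_norm, h]
  have hnsq : Complex.normSq c = 1 := by
    rw [← Complex.sq_norm, hc]; norm_num
  have expand : ∀ t : ℝ, Complex.normSq ((E:ℂ) - c * t) = E^2 - 2*E*c.re*t + t^2 := by
    intro t
    simp [Complex.normSq_sub, Complex.normSq_mul, Complex.normSq_ofReal, hnsq,
      Complex.mul_re, Complex.mul_im]
    ring
  rw [expand, expand] at hsq
  have hfac : (t1 - t2) * (t1 + t2 - 2*E*c.re) = 0 := by nlinarith [hsq]
  have hpos : t1 + t2 - 2*E*c.re > 0 := by nlinarith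
  rcases mul_eq_zero.mp hfac with h' | h'
  · linarith
  · linarith

lemma aux_decomp (r : ℝ) (w : ℂ) :
    Complex.exp (-(Real.pi * r : ℂ) * Complex.I) * Complex.exp (-(2 * Real.pi * r : ℂ) * Complex.I * w)
      = Complex.exp (((-(Real.pi*r) - 2*Real.pi*r*w.re : ℝ):ℂ) * Complex.I) * ((Real.exp (2*Real.pi*r*w.im) : ℝ):ℂ) := by
  rw [← Complex.exp_add, Complex.ofReal_exp, ← Complex.exp_add]
  congr 1
  apply Complex.ext <;> simp [Complex.mul_re, Complex.mul_im] <;> ring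

theorem stmt_4 (r : ℝ) (h0 : 0 < r) (h1 : r ≤ 1 / 2) :
    Set.InjOn (Yr r) {w : ℂ | w.im ≥ -1} := by
  have hπ := Real.pi_pos
  set E : ℝ := Real.exp (-3 * Real.pi * r) with hEdef
  have hE : 0 < E := Real.exp_pos _
  -- the denominator is nonzero
  have hD : (((E : ℝ) : ℂ) - Complex.exp ((Real.pi * r : ℂ) * Complex.I)) ≠ 0 := by
    intro h
    have h2 : ((E : ℝ) : ℂ) = Complex.exp ((Real.pi * r : ℂ) * Complex.I) := by
      linear_combination h
    have h3 : norm ((E : ℝ) : ℂ) = norm (Complex.exp ((Real.pi * r : ℂ) * Complex.I)) := by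
      rw [h2]
    rw [Complex.norm_real, Real.norm_eq_abs, Complex.norm_exp] at h3
    have h4 : ((Real.pi * r : ℂ) * Complex.I).re = 0 := by simp
    rw [h4, Real.exp_zero, abs_of_pos hE] at h3
    have : (-3 : ℝ) * Real.pi * r < 0 := by nlinarith
    have := Real.exp_lt_one_iff.mpr this
    rw [← hEdef] at this
    linarith [h3, this]
  -- setup per-point data
  intro w1 hw1 w2 hw2 heq
  simp only [Set.mem_setOf_eq] at hw1 hw2
  set L : ℂ → ℝ := fun w => Real.log (norm
        ((((Real.exp (-3 * Real.pi * r) : ℝ) : ℂ) -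
            Complex.exp (-(Real.pi * r : ℂ) * Complex.I) *
              Complex.exp (-(2 * Real.pi * r : ℂ) * Complex.I * w)) /
          (((Real.exp (-3 * Real.pi * r) : ℝ) : ℂ) -
            Complex.exp ((Real.pi * r : ℂ) * Complex.I)))) with hLdef
  have hYr : ∀ w, Yr r w = ((r * w.re : ℝ) : ℂ) + Complex.I / (2*(Real.pi:ℂ)) * ((L w : ℝ) : ℂ) := by
    intro w; rfl
  have hre : w1.re = w2.re := by
    have := congrArg Complex.re heq
    rw [hYr, hYr, aux_re, aux_re] at this
    exact mul_left_cancel₀ (ne_of_gt h0) this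
  have hL : L w1 = L w2 := by
    have := congrArg Complex.im heq
    rw [hYr, hYr, aux_im, aux_im] at this
    have h2π : (2 * Real.pi) ≠ 0 := by positivity
    field_simp at this
    exact this
  -- decompose the numerators
  set c : ℂ := Complex.exp (((-(Real.pi*r) - 2*Real.pi*r*w1.re : ℝ):ℂ) * Complex.I) with hcdef
  have hc : norm c = 1 := by
    rw [hcdef, Complex.norm_exp]
    simp
  set t1 : ℝ := Real.exp (2*Real.pi*r*w1.im) with ht1def
  set t2 : ℝ := Real.exp (2*Real.pi*r*w2.im) with ht2def
  have hd1 : Complex.exp (-(Real.pi * r : ℂ) * Complex.I) *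
      Complex.exp (-(2 * Real.pi * r : ℂ) * Complex.I * w1) = c * (t1 : ℂ) := aux_decomp r w1
  have hd2 : Complex.exp (-(Real.pi * r : ℂ) * Complex.I) *
      Complex.exp (-(2 * Real.pi * r : ℂ) * Complex.I * w2) = c * (t2 : ℂ) := by
    have := aux_decomp r w2
    rw [← hre] at this
    exact this
  -- E < t1, E < t2
  have hEt : ∀ y : ℝ, y ≥ -1 → E < Real.exp (2*Real.pi*r*y) := by
    intro y hy
    rw [hEdef]
    apply Real.exp_lt_exp.mpr
    nlinarith [mul_nonneg (by positivity : (0:ℝ) ≤ 2*Real.pi*r) (by linarith : (0:ℝ) ≤ y+1),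
      mul_pos Real.pi_pos h0]
  have hEt1 : E < t1 := hEt _ hw1
  have hEt2 : E < t2 := hEt _ hw2
  -- numerators are nonzero
  have hnum : ∀ t : ℝ, E < t → ((E : ℝ) : ℂ) - c * (t : ℂ) ≠ 0 := by
    intro t ht h
    have h2 : ((E : ℝ) : ℂ) = c * (t : ℂ) := by linear_combination h
    have h3 := congrArg (norm : ℂ → ℝ) h2
    rw [Complex.norm_real, Real.norm_eq_abs, norm_mul, hc, Complex.norm_real, Real.norm_eq_abs, one_mul,
      abs_of_pos hE, abs_of_pos (lt_trans hE ht)] at h3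
    linarith
  -- from equality of logs to equality of abs
  have habs : norm (((E : ℝ) : ℂ) - c * (t1 : ℂ)) = norm (((E : ℝ) : ℂ) - c * (t2 : ℂ)) := by
    have e1 : L w1 = Real.log (norm (((E : ℝ) : ℂ) - c * (t1 : ℂ))) -
        Real.log (norm (((E : ℝ) : ℂ) - Complex.exp ((Real.pi * r : ℂ) * Complex.I))) := by
      rw [hLdef]
      simp only [← hEdef, hd1]
      rw [norm_div, Real.log_div]
      · exact norm_ne_zero_iff.mpr (hnum t1 hEt1)
      · exact norm_ne_zero_iff.mpr hD
    have e2 : L w2 = Real.log (norm (((E : ℝ) : ℂ) - c * (t2 : ℂ))) -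
        Real.log (norm (((E : ℝ) : ℂ) - Complex.exp ((Real.pi * r : ℂ) * Complex.I))) := by
      rw [hLdef]
      simp only [← hEdef, hd2]
      rw [norm_div, Real.log_div]
      · exact norm_ne_zero_iff.mpr (hnum t2 hEt2)
      · exact norm_ne_zero_iff.mpr hD
    rw [e1, e2] at hL
    have hlog : Real.log (norm (((E : ℝ) : ℂ) - c * (t1 : ℂ))) =
        Real.log (norm (((E : ℝ) : ℂ) - c * (t2 : ℂ))) := by linarith
    have p1 : 0 < norm (((E : ℝ) : ℂ) - c * (t1 : ℂ)) :=
      norm_pos_iff.mpr (hnum t1 hEt1)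
    have p2 : 0 < norm (((E : ℝ) : ℂ) - c * (t2 : ℂ)) :=
      norm_pos_iff.mpr (hnum t2 hEt2)
    calc norm (((E : ℝ) : ℂ) - c * (t1 : ℂ))
        = Real.exp (Real.log (norm (((E : ℝ) : ℂ) - c * (t1 : ℂ)))) := (Real.exp_log p1).symm
      _ = Real.exp (Real.log (norm (((E : ℝ) : ℂ) - c * (t2 : ℂ)))) := by rw [hlog]
      _ = norm (((E : ℝ) : ℂ) - c * (t2 : ℂ)) := Real.exp_log p2
  have ht : t1 = t2 := aux_key E t1 t2 c hc hE hEt1 hEt2 habs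
  have him : w1.im = w2.im := by
    have h' : 2*Real.pi*r*w1.im = 2*Real.pi*r*w2.im := Real.exp_injective ht
    exact mul_left_cancel₀ (by positivity) h'
  exact Complex.ext hre him
end

section
/- For every r ∈ (0, 1/2] and every real t ≥ −1, Y_r(it + 1/r − 1) = Y_r(it) + (1 − r). -/
theorem stmt_8 (r : ℝ) (h0 : 0 < r) (h1 : r ≤ 1 / 2) (t : ℝ) (ht : t ≥ -1) :
    Yr r (Complex.I * (t : ℂ) + (1 / r : ℝ) - 1) = Yr r (Complex.I * (t : ℂ)) + ((1 - r : ℝ) : ℂ) := by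
  have hrC : (r : ℂ) ≠ 0 := Complex.ofReal_ne_zero.mpr h0.ne'
  unfold Yr
  have hre : (Complex.I * (t : ℂ) + ((1 / r : ℝ) : ℂ) - 1).re = 1 / r - 1 := by simp
  have hre2 : (Complex.I * (t : ℂ)).re = 0 := by simp
  rw [hre, hre2]
  have h2 : r * (1 / r - 1) = 1 - r := by field_simp
  have hA :
      Complex.exp (-(Real.pi * r : ℂ) * Complex.I) *
          Complex.exp (-(2 * Real.pi * r : ℂ) * Complex.I *
            (Complex.I * (t : ℂ) + ((1 / r : ℝ) : ℂ) - 1))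
        = Complex.exp (((2 * Real.pi * r * t : ℝ) : ℂ) + ((Real.pi * r : ℝ) : ℂ) * Complex.I) := by
    rw [← Complex.exp_add]
    have he : (-(Real.pi * r : ℂ) * Complex.I +
        -(2 * Real.pi * r : ℂ) * Complex.I *
          (Complex.I * (t : ℂ) + ((1 / r : ℝ) : ℂ) - 1))
        = (((2 * Real.pi * r * t : ℝ) : ℂ) + ((Real.pi * r : ℝ) : ℂ) * Complex.I)
          - 2 * (Real.pi : ℂ) * Complex.I := by
      have h : ((1 / r : ℝ) : ℂ) = 1 / (r : ℂ) := by push_cast; ring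
      rw [h]
      field_simp
      push_cast
      linear_combination (-2 * (Real.pi : ℂ) * r * t) * Complex.I_mul_I
    rw [he, Complex.exp_sub, Complex.exp_two_pi_mul_I, div_one]
  have hB :
      Complex.exp (-(Real.pi * r : ℂ) * Complex.I) *
          Complex.exp (-(2 * Real.pi * r : ℂ) * Complex.I * (Complex.I * (t : ℂ)))
        = Complex.exp (((2 * Real.pi * r * t : ℝ) : ℂ) + (-(Real.pi * r : ℝ) : ℂ) * Complex.I) := by
    rw [← Complex.exp_add]
    congr 1
    push_cast
    linear_combination (-2 * (Real.pi : ℂ) * r * t) * Complex.I_mul_I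
  set E : ℂ := ((Real.exp (-3 * Real.pi * r) : ℝ) : ℂ) with hE
  have habs :
      norm (E - Complex.exp (-(Real.pi * r : ℂ) * Complex.I) *
              Complex.exp (-(2 * Real.pi * r : ℂ) * Complex.I *
                (Complex.I * (t : ℂ) + ((1 / r : ℝ) : ℂ) - 1)))
        = norm (E - Complex.exp (-(Real.pi * r : ℂ) * Complex.I) *
              Complex.exp (-(2 * Real.pi * r : ℂ) * Complex.I * (Complex.I * (t : ℂ)))) := by
    rw [hA, hB]
    have hconj : (E - Complex.exp (((2 * Real.pi * r * t : ℝ) : ℂ) + ((Real.pi * r : ℝ) : ℂ) * Complex.I))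
        = (starRingEnd ℂ) (E - Complex.exp (((2 * Real.pi * r * t : ℝ) : ℂ) + (-(Real.pi * r : ℝ) : ℂ) * Complex.I)) := by
      rw [map_sub, ← Complex.exp_conj]
      congr 1
      · exact (Complex.conj_ofReal _).symm
      · congr 1
        simp [Complex.ext_iff]
    rw [hconj, Complex.norm_conj]
  rw [norm_div, norm_div, habs]
  push_cast
  have h3 : (r : ℂ) * (1 / (r : ℂ) - 1) = 1 - (r : ℂ) := by field_simp
  rw [h3]
  ring
end

section
/- For every r ∈ (0, 1/2] and every real y ≥ 1, |2π·Im Y_r(i·y/(2π)) − h_r^{−1}(y)| ≤ π, where Y_r(w) = r·Re w + (i/(2π))·log|(e^{−3πr} − e^{−πri}e^{−2πri·w})/(e^{−3πr} − e^{πri})| and h_r^{−1}(y) = r·y + log(1/r) − 1 for y ≥ 1/r, h_r^{−1}(y) = log y for 0 < y ≤ 1/r. -/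
/-- The inverse of the Herman comparison function `h_r`. -/
noncomputable def hfunInv (r : ℝ) (y : ℝ) : ℝ :=
  if 1 / r ≤ y then r * y + Real.log (1 / r) - 1 else Real.log y

private lemma im_helper (a L : ℝ) :
    (2:ℝ) * Real.pi * (((a:ℝ):ℂ) + Complex.I / (2 * (Real.pi : ℂ)) * ((L:ℝ):ℂ)).im = L := by
  have hπ : Real.pi ≠ 0 := Real.pi_ne_zero
  have h : Complex.I / (2 * (Real.pi : ℂ)) * ((L:ℝ):ℂ) = ((L / (2*Real.pi) : ℝ):ℂ) * Complex.I := by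
    have hπne : (Real.pi : ℂ) ≠ 0 := by exact_mod_cast hπ
    push_cast
    field_simp
  rw [h]
  simp [Complex.add_im, Complex.mul_I_im]
  rw [show ((L:ℂ)/(2*(Real.pi:ℂ))) = ((L/(2*Real.pi):ℝ):ℂ) from by push_cast; ring]
  rw [Complex.ofReal_re]; field_simp

private lemma abs_one_sub_exp_mul_I {θ : ℝ} (h0 : 0 ≤ θ) (h2 : θ ≤ 2) :
    ‖1 - Complex.exp ((θ:ℂ) * Complex.I)‖ ≤ θ ∧
    ‖1 - Complex.exp (-(θ:ℂ) * Complex.I)‖ ≤ θ := by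
  have hpi := Real.pi_gt_three
  have hsin_nonneg : 0 ≤ Real.sin (θ/2) :=
    Real.sin_nonneg_of_nonneg_of_le_pi (by linarith) (by linarith)
  have hsin_le : Real.sin (θ/2) ≤ θ/2 := Real.sin_le (by linarith)
  have hcos : Real.cos θ = 1 - 2 * Real.sin (θ/2)^2 := by
    have h1 : Real.cos (2 * (θ/2)) = 2 * Real.cos (θ/2)^2 - 1 := Real.cos_two_mul (θ/2)
    have h2 : Real.sin (θ/2)^2 + Real.cos (θ/2)^2 = 1 := Real.sin_sq_add_cos_sq (θ/2)
    rw [show 2 * (θ/2) = θ by ring] at h1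
    linarith
  have hkey : 2 - 2 * Real.cos θ ≤ θ^2 := by nlinarith
  constructor
  · have hsq : (‖1 - Complex.exp ((θ:ℂ) * Complex.I)‖)^2 = 2 - 2 * Real.cos θ := by
      rw [Complex.sq_norm, Complex.normSq_apply]
      simp only [Complex.sub_re, Complex.sub_im, Complex.one_re, Complex.one_im,
        Complex.exp_ofReal_mul_I_re, Complex.exp_ofReal_mul_I_im]
      nlinarith [Real.sin_sq_add_cos_sq θ]
    refine le_of_pow_le_pow_left₀ two_ne_zero h0 ?_
    rw [hsq]
    nlinarith
  · have harg : -(θ:ℂ) * Complex.I = (((-θ : ℝ)):ℂ) * Complex.I := by push_cast; ring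
    have hsq : (‖1 - Complex.exp (-(θ:ℂ) * Complex.I)‖)^2 = 2 - 2 * Real.cos θ := by
      rw [harg, Complex.sq_norm, Complex.normSq_apply]
      simp only [Complex.sub_re, Complex.sub_im, Complex.one_re, Complex.one_im,
        Complex.exp_ofReal_mul_I_re, Complex.exp_ofReal_mul_I_im, Real.cos_neg, Real.sin_neg]
      nlinarith [Real.sin_sq_add_cos_sq θ]
    refine le_of_pow_le_pow_left₀ two_ne_zero h0 ?_
    rw [hsq]
    nlinarith

set_option maxHeartbeats 1000000 in
private lemma final_est (r y : ℝ) (h0 : 0 < r) (h1 : r ≤ 1 / 2) (hy : 1 ≤ y)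
    (A E nN nD : ℝ)
    (hA_pos : 0 < A) (hA_le1 : A ≤ 1) (honesubA : 1 - A ≤ 3 * Real.pi * r)
    (hE_pos : 0 < E) (hE_ge : r * y + 1 ≤ E) (hlogE : Real.log E = r * y)
    (hNpos : 0 < nN) (hNlb : E - A ≤ nN) (hNub1 : nN ≤ A + E)
    (hNub2 : nN ≤ (E - A) + E * (Real.pi * r))
    (hDpos : 0 < nD) (hDub : nD ≤ 4 * (Real.pi * r))
    (hDlb : 2 * r ≤ nD) :
    |Real.log nN - Real.log nD - hfunInv r y| ≤ Real.pi := by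
  have hπ := Real.pi_pos
  have hπ3 := Real.pi_gt_three
  have hπ315 := Real.pi_lt_d2
  have hy0 : (0:ℝ) < y := lt_of_lt_of_le one_pos hy
  have hry0 : 0 < r * y := mul_pos h0 hy0
  have hπr0 : 0 < Real.pi * r := mul_pos hπ h0
  have hEdef : E = Real.exp (r * y) := by
    rw [← hlogE, Real.exp_log hE_pos]
  -- numeric facts
  have hexp_pi : (20:ℝ) ≤ Real.exp Real.pi := by
    have h3 : Real.exp 3 ≤ Real.exp Real.pi := Real.exp_le_exp.mpr (by linarith)
    have he3 : Real.exp 3 = Real.exp 1 ^ 3 := by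
      rw [show (3:ℝ) = (3:ℕ) * 1 by norm_num, Real.exp_nat_mul]
    have h1' : (2.7182818283:ℝ) ≤ Real.exp 1 := le_of_lt Real.exp_one_gt_d9
    have h2' : (2.7182818283:ℝ)^3 ≤ Real.exp 1 ^ 3 := pow_le_pow_left₀ (by norm_num) h1' 3
    have h20 : (20:ℝ) ≤ (2.7182818283:ℝ)^3 := by norm_num
    linarith
  have hlog4pi : Real.log (4 * Real.pi) ≤ Real.pi := by
    rw [Real.log_le_iff_le_exp (by positivity)]
    linarith
  -- |D| log bounds
  have hlogD_ub : Real.log nD ≤ Real.pi + Real.log r := by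
    have h := (Real.log_le_log_iff hDpos (by positivity)).mpr hDub
    rw [show 4 * (Real.pi * r) = (4 * Real.pi) * r by ring,
      Real.log_mul (by positivity) h0.ne'] at h
    linarith
  have hlogD_lb : Real.log 2 + Real.log r ≤ Real.log nD := by
    have h2r : (0:ℝ) < 2 * r := by linarith
    have h := (Real.log_le_log_iff h2r hDpos).mpr hDlb
    rw [Real.log_mul two_ne_zero h0.ne'] at h
    linarith
  rcases le_or_gt (1 / r) y with hcase | hcase
  · -- y ≥ 1/r
    rw [hfunInv, if_pos hcase, one_div, Real.log_inv]
    have hry1 : 1 ≤ r * y := by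
      rw [div_le_iff₀ h0] at hcase
      linarith [hcase]
    have hEe : Real.exp 1 ≤ E := by rw [hEdef]; exact Real.exp_le_exp.mpr hry1
    have hinvE : 1 ≤ Real.exp (-1) * E := by
      rw [Real.exp_neg, inv_mul_eq_div, le_div_iff₀ (Real.exp_pos 1), one_mul]
      exact hEe
    have hNlb2 : (1 - Real.exp (-1)) * E ≤ nN := by
      have hge : (1 - Real.exp (-1)) * E ≤ E - A := by nlinarith [hinvE, hA_le1]
      linarith
    have h1me : (0:ℝ) < 1 - Real.exp (-1) := by
      have h := Real.exp_lt_exp.mpr (show (-1:ℝ) < 0 by norm_num)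
      rw [Real.exp_zero] at h
      linarith
    have hlogN_lb : Real.log (1 - Real.exp (-1)) + r * y ≤ Real.log nN := by
      have h := (Real.log_le_log_iff (by positivity) hNpos).mpr hNlb2
      rw [Real.log_mul h1me.ne' hE_pos.ne', hlogE] at h
      linarith
    have hlog1e : (-1:ℝ) ≤ Real.log (1 - Real.exp (-1)) := by
      rw [Real.le_log_iff_exp_le h1me]
      have hem : Real.exp (-1) * Real.exp 1 = 1 := by rw [← Real.exp_add]; norm_num
      have hlt : Real.exp (-1) < 1/2 := by
        nlinarith [hem, Real.exp_one_gt_d9, Real.exp_pos (-1:ℝ)]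
      linarith
    have hlogN_ub : Real.log nN ≤ Real.log 2 + r * y := by
      have hle : nN ≤ 2 * E := by nlinarith
      have h := (Real.log_le_log_iff hNpos (by positivity)).mpr hle
      rw [Real.log_mul two_ne_zero hE_pos.ne', hlogE] at h
      linarith
    rw [abs_le]
    constructor <;> linarith
  · -- y < 1/r
    rw [hfunInv, if_neg (not_le.mpr hcase)]
    have hry1 : r * y ≤ 1 := by
      rw [lt_div_iff₀ h0] at hcase
      linarith [hcase]
    have hE_le : E ≤ Real.exp 1 := by rw [hEdef]; exact Real.exp_le_exp.mpr hry1
    have hEm1 : E - 1 ≤ Real.exp 1 * (r * y) := by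
      have h := Real.add_one_le_exp (-(r * y))
      rw [Real.exp_neg, ← hEdef] at h
      have hE1 : E * (1 - r * y) ≤ 1 := by
        have h2 := mul_le_mul_of_nonneg_left h (le_of_lt hE_pos)
        rw [mul_inv_cancel₀ hE_pos.ne'] at h2
        calc E * (1 - r * y) = E * (-(r * y) + 1) := by ring
          _ ≤ 1 := h2
      have hEry : E * (r * y) ≤ Real.exp 1 * (r * y) :=
        mul_le_mul_of_nonneg_right hE_le (le_of_lt hry0)
      nlinarith
    have hr_le : r ≤ r * y := by nlinarith
    have hNub3 : nN ≤ r * y * (Real.exp 1 + 3 * Real.pi + Real.exp 1 * Real.pi) := by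
      have hb1 : E - A ≤ Real.exp 1 * (r * y) + 3 * Real.pi * r := by linarith
      have hb2 : E * (Real.pi * r) ≤ Real.exp 1 * (Real.pi * r) :=
        mul_le_mul_of_nonneg_right hE_le (le_of_lt hπr0)
      have hb3 : 3 * Real.pi * r ≤ 3 * Real.pi * (r * y) := by
        have := mul_le_mul_of_nonneg_left hr_le (by positivity : (0:ℝ) ≤ 3 * Real.pi)
        linarith
      have hb4 : Real.exp 1 * (Real.pi * r) ≤ Real.exp 1 * Real.pi * (r * y) := by
        have := mul_le_mul_of_nonneg_left hr_le
          (by positivity : (0:ℝ) ≤ Real.exp 1 * Real.pi)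
        calc Real.exp 1 * (Real.pi * r) = Real.exp 1 * Real.pi * r := by ring
          _ ≤ Real.exp 1 * Real.pi * (r * y) := this
      calc nN ≤ (E - A) + E * (Real.pi * r) := hNub2
        _ ≤ Real.exp 1 * (r * y) + 3 * Real.pi * (r * y)
            + Real.exp 1 * Real.pi * (r * y) := by linarith
        _ = r * y * (Real.exp 1 + 3 * Real.pi + Real.exp 1 * Real.pi) := by ring
    have hK_pos : (0:ℝ) < Real.exp 1 + 3 * Real.pi + Real.exp 1 * Real.pi := by positivity
    have hlogN_ub : Real.log nN ≤ Real.log r + Real.log y +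
        Real.log (Real.exp 1 + 3 * Real.pi + Real.exp 1 * Real.pi) := by
      have h := (Real.log_le_log_iff hNpos (by positivity)).mpr hNub3
      rw [Real.log_mul (by positivity) hK_pos.ne', Real.log_mul h0.ne' hy0.ne'] at h
      linarith
    have hlogK : Real.log (Real.exp 1 + 3 * Real.pi + Real.exp 1 * Real.pi) ≤
        Real.pi + Real.log 2 := by
      rw [Real.log_le_iff_le_exp hK_pos, Real.exp_add, Real.exp_log two_pos]
      have hepi : Real.exp 1 * Real.pi ≤ 2.7182818286 * 3.15 :=
        mul_le_mul (le_of_lt Real.exp_one_lt_d9) (le_of_lt hπ315) (le_of_lt hπ)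
          (by norm_num)
      have := Real.exp_one_lt_d9
      linarith
    have hlogN_lb : Real.log r + Real.log y ≤ Real.log nN := by
      have h := (Real.log_le_log_iff hry0 hNpos).mpr (by linarith)
      rw [Real.log_mul h0.ne' hy0.ne'] at h
      linarith
    rw [abs_le]
    constructor <;> linarith

set_option maxHeartbeats 800000 in
theorem stmt_19 (r : ℝ) (h0 : 0 < r) (h1 : r ≤ 1 / 2) (y : ℝ) (hy : 1 ≤ y) :
    |2 * Real.pi * (Yr r (Complex.I * (y : ℂ) / (2 * (Real.pi : ℂ)))).im - hfunInv r y| ≤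
      Real.pi := by
  have hπ := Real.pi_pos
  have hπ3 := Real.pi_gt_three
  have hπ315 := Real.pi_lt_d2
  have hy0 : (0:ℝ) < y := lt_of_lt_of_le one_pos hy
  have hry0 : 0 < r * y := mul_pos h0 hy0
  have hπr0 : 0 < Real.pi * r := mul_pos hπ h0
  have hπr2 : Real.pi * r ≤ Real.pi / 2 := by nlinarith
  obtain ⟨A, hAdef⟩ : ∃ A : ℝ, A = Real.exp (-3 * Real.pi * r) := ⟨_, rfl⟩
  obtain ⟨E, hEdef⟩ : ∃ E : ℝ, E = Real.exp (r * y) := ⟨_, rfl⟩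
  obtain ⟨N, hNdef⟩ : ∃ N : ℂ, N = ((A : ℝ) : ℂ) -
      Complex.exp (-(Real.pi * r : ℂ) * Complex.I) * ((E : ℝ) : ℂ) := ⟨_, rfl⟩
  obtain ⟨D, hDdef⟩ : ∃ D : ℂ, D = ((A : ℝ) : ℂ) -
      Complex.exp ((Real.pi * r : ℂ) * Complex.I) := ⟨_, rfl⟩
  -- basic real bounds
  have hA_pos : 0 < A := by rw [hAdef]; exact Real.exp_pos _
  have hA_le1 : A ≤ 1 := by rw [hAdef]; exact Real.exp_le_one_iff.mpr (by nlinarith)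
  have hE_pos : 0 < E := by rw [hEdef]; exact Real.exp_pos _
  have hE_ge : r * y + 1 ≤ E := by rw [hEdef]; exact Real.add_one_le_exp _
  have hlogE : Real.log E = r * y := by rw [hEdef, Real.log_exp]
  have hEA : r * y ≤ E - A := by linarith
  have honesubA : 1 - A ≤ 3 * Real.pi * r := by
    have := Real.add_one_le_exp (-3 * Real.pi * r); rw [← hAdef] at this; linarith
  have hs_ge : 2 * r ≤ Real.sin (Real.pi * r) := by
    have h := Real.mul_le_sin (le_of_lt hπr0) hπr2
    have heq : 2 / Real.pi * (Real.pi * r) = 2 * r := by field_simp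
    rw [heq] at h
    exact h
  -- exp argument rewrites
  have hargpos : ((Real.pi * r : ℂ)) * Complex.I = (((Real.pi * r : ℝ)):ℂ) * Complex.I := by
    push_cast; ring
  have hargneg : (-(Real.pi * r : ℂ)) * Complex.I = (-((Real.pi * r : ℝ):ℂ)) * Complex.I := by
    push_cast; ring
  -- |exp(-iθ)| = 1
  have habs_exp1 : ‖Complex.exp (-(Real.pi * r : ℂ) * Complex.I)‖ = 1 := by
    rw [Complex.norm_exp]
    simp
  have habs1 := abs_one_sub_exp_mul_I (θ := Real.pi * r) (le_of_lt hπr0) (by nlinarith)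
  -- bounds on |N|
  have hNlb : E - A ≤ ‖N‖ := by
    have h := norm_sub_norm_le (Complex.exp (-(Real.pi * r : ℂ) * Complex.I) * ((E:ℝ):ℂ))
      ((A:ℝ):ℂ)
    rw [norm_mul, habs_exp1, one_mul, Complex.norm_of_nonneg hE_pos.le,
      Complex.norm_of_nonneg hA_pos.le] at h
    calc E - A ≤ ‖Complex.exp (-(Real.pi * r : ℂ) * Complex.I) * ((E:ℝ):ℂ)
        - ((A:ℝ):ℂ)‖ := h
      _ = ‖N‖ := by rw [hNdef, norm_sub_rev]
  have hNpos : 0 < ‖N‖ := lt_of_lt_of_le (by linarith) hNlb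
  have hNub1 : ‖N‖ ≤ A + E := by
    rw [hNdef]
    refine le_trans (norm_sub_le _ _) ?_
    rw [norm_mul, habs_exp1, one_mul, Complex.norm_of_nonneg hE_pos.le,
      Complex.norm_of_nonneg hA_pos.le]
  have hNub2 : ‖N‖ ≤ (E - A) + E * (Real.pi * r) := by
    have hsplit : N = (((A:ℝ):ℂ) - ((E:ℝ):ℂ)) +
        ((E:ℝ):ℂ) * (1 - Complex.exp (-(Real.pi * r : ℂ) * Complex.I)) := by
      rw [hNdef]; ring
    rw [hsplit]
    refine le_trans (norm_add_le _ _) ?_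
    rw [norm_mul, Complex.norm_of_nonneg hE_pos.le]
    have h1 : ‖((A:ℝ):ℂ) - ((E:ℝ):ℂ)‖ = E - A := by
      rw [← Complex.ofReal_sub, Complex.norm_real, Real.norm_eq_abs, abs_of_nonpos (by linarith), neg_sub]
    have h2 : ‖1 - Complex.exp (-(Real.pi * r : ℂ) * Complex.I)‖ ≤ Real.pi * r := by
      have := habs1.2
      rw [← hargneg] at this
      exact this
    rw [h1]
    nlinarith
  -- bounds on |D|
  have hDim : D.im = - Real.sin (Real.pi * r) := by
    rw [hDdef, hargpos]
    simp only [Complex.sub_im, Complex.ofReal_im, Complex.exp_ofReal_mul_I_im]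
    ring
  have hDlb : Real.sin (Real.pi * r) ≤ ‖D‖ := by
    have h := Complex.abs_im_le_norm D
    rw [hDim, abs_neg, abs_of_nonneg (by linarith)] at h
    exact h
  have hDpos : 0 < ‖D‖ := lt_of_lt_of_le (by linarith) hDlb
  have hDub : ‖D‖ ≤ 4 * (Real.pi * r) := by
    have hsplit : D = (((A:ℝ):ℂ) - 1) + (1 - Complex.exp ((Real.pi * r : ℂ) * Complex.I)) := by
      rw [hDdef]; ring
    rw [hsplit]
    refine le_trans (norm_add_le _ _) ?_
    have h1 : ‖((A:ℝ):ℂ) - 1‖ = 1 - A := by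
      rw [show ((A:ℝ):ℂ) - 1 = (((A - 1 : ℝ)):ℂ) by push_cast; ring, Complex.norm_real, Real.norm_eq_abs,
        abs_of_nonpos (by linarith), neg_sub]
    have h2 : ‖1 - Complex.exp ((Real.pi * r : ℂ) * Complex.I)‖ ≤ Real.pi * r := by
      have := habs1.1
      rw [← hargpos] at this
      exact this
    rw [h1]
    nlinarith
  -- the key identity
  have hexp : Complex.exp (-(2 * Real.pi * r : ℂ) * Complex.I *
      (Complex.I * (y : ℂ) / (2 * (Real.pi : ℂ)))) = ((E:ℝ) : ℂ) := by
    rw [hEdef, Complex.ofReal_exp]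
    congr 1
    have hπne : (Real.pi : ℂ) ≠ 0 := by exact_mod_cast Real.pi_ne_zero
    push_cast
    field_simp
    linear_combination (-(r:ℂ) * y) * Complex.I_sq
  have key : 2 * Real.pi * (Yr r (Complex.I * (y : ℂ) / (2 * (Real.pi : ℂ)))).im
      = Real.log (‖N‖) - Real.log (‖D‖) := by
    simp only [Yr, hexp]
    rw [← hAdef, ← hNdef, ← hDdef, norm_div,
      Real.log_div hNpos.ne' hDpos.ne', im_helper]
  rw [key]
  exact final_est r y h0 h1 hy A E (‖N‖) (‖D‖) hA_pos hA_le1 honesubA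
    hE_pos hE_ge hlogE hNpos hNlb hNub1 hNub2 hDpos hDub (le_trans hs_ge hDlb)
end
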